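/- Let β be an odd Gaussian integer that is not of the form η·β₁² for a unit η and β₁ ∈ ℤ[i]. Then ∑_{α mod β} [α/β] = 0, where α runs over residue classes of ℤ[i]/βℤ[i]; if β = ηβ₁² then the sum equals φ(β), the number of residue classes coprime to β. -/

import Mathlib

/-!
The symbol `[·/β]` is multiplicative in the numerator (on each residue field `ℤ[i]/π` the
factor `[·/π]` is the quadratic character) and depends only on the class mod `β`, so it is a
multiplicative character of `ℤ[i]/β`. If `β = η β₁²`, every prime factor occurs in pairs and
the character is `1` on units and `0` elsewhere, which gives `φ(β)`. Otherwise some prime `π`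
divides `β` exactly to an odd power `π^k`; by the Chinese remainder theorem there is an `α`
that is a non-residue mod `π` and `≡ 1` mod `β / π^k`, so `[α/β] = (-1)^k = -1`. The
character is then nontrivial and its sum vanishes. Oddness of `β` is what makes the residue
fields `ℤ[i]/π` of odd characteristic, so that non-residues exist.
-/

/-- The quadratic residue symbol `[α/π]` for an irreducible odd Gaussian `π`:
`0` if `π ∣ α`, `1` if `α` is a nonzero square mod `π`, `-1` otherwise. -/
noncomputable def gQR (α π : GaussianInt) : ℤ := by
  classical
  exact if π ∣ α then 0 else if ∃ β : GaussianInt, π ∣ (β ^ 2 - α) then 1 else -1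

/-- The quadratic residue symbol `[α/β]`, extended multiplicatively in the
denominator over a factorization of `β` into irreducibles. -/
noncomputable def gSym (α β : GaussianInt) : ℤ :=
  ((UniqueFactorizationMonoid.factors β).map fun π => gQR α π).prod

/-- Complex conjugation on Gaussian integers. -/
def gconj (z : GaussianInt) : GaussianInt := ⟨z.re, -z.im⟩

/-- The number of elements of a finite set `S` coprime to `β`. -/
noncomputable def coprimeCount (S : Finset GaussianInt) (β : GaussianInt) : ℕ := by
  classical
  exact (S.filter fun s => IsCoprime s β).card

open UniqueFactorizationMonoid

section ResidueSystem

variable {R : Type*} [CommRing R] {β : R} {S : Finset R}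

lemma Ideal.Quotient.mk_span_singleton_eq_mk_iff {a b : R} :
    Ideal.Quotient.mk (Ideal.span {β}) a = Ideal.Quotient.mk (Ideal.span {β}) b ↔ β ∣ a - b := by
  rw [Ideal.Quotient.mk_eq_mk_iff_sub_mem, Ideal.mem_span_singleton]

lemma IsCoprime.isUnit_mk {a : R} (h : IsCoprime a β) :
    IsUnit (Ideal.Quotient.mk (Ideal.span {β}) a) := by
  obtain ⟨u, v, huv⟩ := h
  refine isUnit_iff_exists_inv.mpr ⟨Ideal.Quotient.mk _ u, ?_⟩
  rw [← map_mul, ← map_one (Ideal.Quotient.mk _), Ideal.Quotient.mk_span_singleton_eq_mk_iff]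
  exact ⟨-v, by linear_combination huv⟩

lemma finite_quotient_of_dvd {α : R} (h : α ∣ β) [Finite (R ⧸ Ideal.span {β})] :
    Finite (R ⧸ Ideal.span {α}) :=
  Finite.of_surjective _ <| Ideal.Quotient.factor_surjective <|
    Ideal.span_singleton_le_span_singleton.mpr h

lemma exists_mem_residue_system_mk_eq (hS : ∀ γ : R, ∃! s, s ∈ S ∧ β ∣ γ - s)
    (x : R ⧸ Ideal.span {β}) : ∃ s ∈ S, Ideal.Quotient.mk _ s = x := by
  obtain ⟨γ, rfl⟩ := Ideal.Quotient.mk_surjective x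
  obtain ⟨s, ⟨hs, hγs⟩, -⟩ := hS γ
  exact ⟨s, hs, (Ideal.Quotient.mk_span_singleton_eq_mk_iff.mpr hγs).symm⟩

lemma finite_quotient_of_residue_system (hS : ∀ γ : R, ∃! s, s ∈ S ∧ β ∣ γ - s) :
    Finite (R ⧸ Ideal.span {β}) :=
  Finite.of_surjective (fun s : S => Ideal.Quotient.mk _ (s : R)) fun x => by
    obtain ⟨s, hs, rfl⟩ := exists_mem_residue_system_mk_eq hS x
    exact ⟨⟨s, hs⟩, rfl⟩

lemma sum_residue_system_mk (hS : ∀ γ : R, ∃! s, s ∈ S ∧ β ∣ γ - s) {M : Type*}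
    [AddCommMonoid M] [Fintype (R ⧸ Ideal.span {β})]
    (g : R ⧸ Ideal.span {β} → M) : ∑ s ∈ S, g (Ideal.Quotient.mk _ s) = ∑ x, g x :=
  Finset.sum_bij (fun s _ => Ideal.Quotient.mk _ s) (fun _ _ => Finset.mem_univ _)
    (fun s hs t ht hst => (hS s).unique ⟨hs, by simp⟩
      ⟨ht, Ideal.Quotient.mk_span_singleton_eq_mk_iff.mp hst⟩)
    (fun x _ => by simpa only [exists_prop] using exists_mem_residue_system_mk_eq hS x)
    (fun _ _ => rfl)

end ResidueSystem

section OddPrimePower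

variable {α : Type*} [CommMonoidWithZero α] [UniqueFactorizationMonoid α]

lemma exists_prime_pow_odd_mul {a : α} (ha : a ≠ 0)
    (h : ¬∃ η b : α, IsUnit η ∧ a = η * b ^ 2) :
    ∃ p k c, Prime p ∧ Odd k ∧ ¬p ∣ c ∧ a = p ^ k * c := by
  -- Split off the full power `p ^ n` of an irreducible factor; if `n` is even, recurse on the
  -- cofactor, which is a proper divisor.
  induction a using (wellFounded_dvdNotUnit (α := α)).induction with | _ a ih => ?_
  have hau : ¬IsUnit a := fun hu => h ⟨a, 1, hu, by rw [one_pow, mul_one]⟩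
  obtain ⟨p, hp, hpa⟩ := WfDvdMonoid.exists_irreducible_factor hau ha
  obtain ⟨n, c, hpc, rfl⟩ := WfDvdMonoid.max_power_factor ha hp
  by_cases hn : Odd n
  · exact ⟨p, n, c, hp.prime, hn, hpc, rfl⟩
  obtain ⟨m, rfl⟩ := Nat.not_odd_iff_even.mp hn
  have hm : m ≠ 0 := by rintro rfl; simp_all
  have hc : c ≠ 0 := right_ne_zero_of_mul ha
  have hcsq : ¬∃ η b : α, IsUnit η ∧ c = η * b ^ 2 := by
    rintro ⟨η, b, hη, rfl⟩
    exact h ⟨η, p ^ m * b, hη, by rw [mul_pow, ← pow_mul, mul_two, mul_left_comm]⟩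
  obtain ⟨q, k, d, hq, hk, hqd, rfl⟩ := ih c ⟨hc, p ^ (m + m), by simp [hp.not_isUnit, hm],
    mul_comm _ _⟩ hc hcsq
  refine ⟨q, k, p ^ (m + m) * d, hq, hk, fun hqpd => ?_, mul_left_comm _ _ _⟩
  rcases hq.dvd_or_dvd hqpd with hqp | hqd'
  · have hqp : q ∣ p := hq.dvd_of_dvd_pow hqp
    exact hpc (((hq.irreducible.associated_of_dvd hp hqp).symm.dvd).trans
      (dvd_mul_of_dvd_left (dvd_pow_self q hk.pos.ne') d))
  · exact hqd hqd'

end OddPrimePower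

lemma Zsqrtd.irreducible_of_prime_natAbs_norm {d : ℤ} {x : ℤ√d} (h : x.norm.natAbs.Prime) :
    Irreducible x := by
  refine ⟨fun hx => h.ne_one (Zsqrtd.norm_eq_one_iff.mpr hx), fun a b hab => ?_⟩
  rw [hab, Zsqrtd.norm_mul, Int.natAbs_mul, Nat.prime_mul_iff] at h
  rcases h with ⟨-, hb⟩ | ⟨-, ha⟩
  · exact Or.inr (Zsqrtd.norm_eq_one_iff.mp hb)
  · exact Or.inl (Zsqrtd.norm_eq_one_iff.mp ha)

lemma GaussianInt.irreducible_one_add_I : Irreducible (⟨1, 1⟩ : GaussianInt) :=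
  Zsqrtd.irreducible_of_prime_natAbs_norm Nat.prime_two

lemma GaussianInt.not_dvd_two_of_dvd {β π : GaussianInt} (hodd : ¬(⟨1, 1⟩ : GaussianInt) ∣ β)
    (hπ : Prime π) (hπβ : π ∣ β) : ¬π ∣ 2 := by
  intro h2
  have hsq : π ∣ (⟨1, 1⟩ : GaussianInt) ^ 2 := by
    rw [show (⟨1, 1⟩ : GaussianInt) ^ 2 = 2 * ⟨0, 1⟩ by decide]
    exact dvd_mul_of_dvd_left h2 _
  have hπ1 := hπ.irreducible.associated_of_dvd irreducible_one_add_I (hπ.dvd_of_dvd_pow hsq)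
  exact hodd (hπ1.symm.dvd.trans hπβ)

section QuadraticResidue

attribute [local instance] Ideal.Quotient.field

variable {a b π : GaussianInt}

lemma gQR_congr (h : π ∣ a - b) : gQR a π = gQR b π := by
  classical
  have hsq (c : GaussianInt) : π ∣ c ^ 2 - a ↔ π ∣ c ^ 2 - b :=
    dvd_iff_dvd_of_dvd_sub (by rwa [sub_sub_sub_cancel_left, dvd_sub_comm])
  exact if_congr (dvd_iff_dvd_of_dvd_sub h) rfl (if_congr (exists_congr hsq) rfl rfl)

lemma gQR_of_associated {π' : GaussianInt} (h : Associated π π') (a : GaussianInt) :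
    gQR a π = gQR a π' := by
  classical
  exact if_congr h.dvd_iff_dvd_left rfl
    (if_congr (exists_congr fun _ => h.dvd_iff_dvd_left) rfl rfl)

lemma gQR_eq_zero_of_dvd (h : π ∣ a) : gQR a π = 0 := by
  simp only [gQR, if_pos h]

lemma gQR_sq_eq_one (h : ¬π ∣ a) : gQR a π ^ 2 = 1 := by
  unfold gQR
  split_ifs <;> norm_num

lemma gQR_one (hπ : ¬IsUnit π) : gQR 1 π = 1 := by
  have h1 : ∃ c : GaussianInt, π ∣ c ^ 2 - 1 := ⟨1, by simp⟩
  simp only [gQR, if_neg (mt isUnit_of_dvd_one hπ), if_pos h1]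

lemma isSquare_mk_iff : IsSquare (Ideal.Quotient.mk (Ideal.span {π}) a) ↔
    ∃ c : GaussianInt, π ∣ c ^ 2 - a := by
  simp only [IsSquare, Ideal.Quotient.mk_surjective.exists, ← map_mul,
    eq_comm (a := Ideal.Quotient.mk _ a), Ideal.Quotient.mk_span_singleton_eq_mk_iff, sq]

lemma gQR_eq_quadraticChar [(Ideal.span {π}).IsMaximal] [Fintype (GaussianInt ⧸ Ideal.span {π})]
    [DecidableEq (GaussianInt ⧸ Ideal.span {π})] (a : GaussianInt) :
    gQR a π = quadraticChar (GaussianInt ⧸ Ideal.span {π}) (Ideal.Quotient.mk _ a) := by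
  classical
  rw [quadraticChar_apply, quadraticCharFun]
  exact if_congr (Ideal.Quotient.eq_zero_iff_dvd π a).symm rfl
    (if_congr isSquare_mk_iff.symm rfl rfl)

lemma gQR_mul (hπ : Prime π) [Finite (GaussianInt ⧸ Ideal.span {π})] (a b : GaussianInt) :
    gQR (a * b) π = gQR a π * gQR b π := by
  classical
  have := PrincipalIdealRing.isMaximal_of_irreducible hπ.irreducible
  have := Fintype.ofFinite (GaussianInt ⧸ Ideal.span {π})
  simp only [gQR_eq_quadraticChar, map_mul]

lemma exists_gQR_eq_neg_one (hπ : Prime π) (h2 : ¬π ∣ 2)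
    [Finite (GaussianInt ⧸ Ideal.span {π})] : ∃ u, gQR u π = -1 := by
  classical
  have := PrincipalIdealRing.isMaximal_of_irreducible hπ.irreducible
  have := Fintype.ofFinite (GaussianInt ⧸ Ideal.span {π})
  have hchar : ringChar (GaussianInt ⧸ Ideal.span {π}) ≠ 2 := fun hc => h2 <| by
    rw [← Ideal.Quotient.eq_zero_iff_dvd, map_ofNat]
    exact_mod_cast hc ▸ ringChar.Nat.cast_ringChar
  obtain ⟨x, hx⟩ := quadraticChar_exists_neg_one hchar
  obtain ⟨u, rfl⟩ := Ideal.Quotient.mk_surjective x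
  exact ⟨u, by rw [gQR_eq_quadraticChar, hx]⟩

end QuadraticResidue

section Symbol

variable {a b c β : GaussianInt}

lemma gSym_eq_prod_of_rel {m : Multiset GaussianInt} (h : Multiset.Rel Associated (factors β) m)
    (a : GaussianInt) : gSym a β = (m.map fun π => gQR a π).prod := by
  rw [gSym, Multiset.rel_eq.mp (Multiset.rel_map.mpr
    (h.mono fun _ _ _ _ hπ => gQR_of_associated hπ a))]

lemma gSym_mul_right (hb : b ≠ 0) (hc : c ≠ 0) (a : GaussianInt) :
    gSym a (b * c) = gSym a b * gSym a c := by
  rw [gSym_eq_prod_of_rel (factors_mul hb hc), Multiset.map_add, Multiset.prod_add, gSym, gSym]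

lemma gSym_pow_right (a b : GaussianInt) (n : ℕ) : gSym a (b ^ n) = gSym a b ^ n := by
  rw [gSym_eq_prod_of_rel (factors_pow n), Multiset.map_nsmul, Multiset.prod_nsmul, gSym]

lemma gSym_of_isUnit (hβ : IsUnit β) (a : GaussianInt) : gSym a β = 1 := by
  rw [gSym, factors_of_isUnit hβ, Multiset.map_zero, Multiset.prod_zero]

lemma gSym_of_irreducible (hπ : Irreducible β) (a : GaussianInt) : gSym a β = gQR a β := by
  obtain ⟨π, hβπ, hfac⟩ := factors_eq_singleton_of_irreducible hπ
  rw [gSym, hfac, Multiset.map_singleton, Multiset.prod_singleton, gQR_of_associated hβπ]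

lemma gSym_one_left (β : GaussianInt) : gSym 1 β = 1 :=
  Multiset.prod_eq_one fun _ hx => by
    obtain ⟨π, hπ, rfl⟩ := Multiset.mem_map.mp hx
    exact gQR_one (irreducible_of_factor π hπ).not_isUnit

lemma gSym_congr (h : β ∣ a - b) : gSym a β = gSym b β := by
  unfold gSym
  congr 1
  exact Multiset.map_congr rfl fun π hπ => gQR_congr ((dvd_of_mem_factors hπ).trans h)

lemma gSym_mul_left [Finite (GaussianInt ⧸ Ideal.span {β})] (a b : GaussianInt) :
    gSym (a * b) β = gSym a β * gSym b β := by
  unfold gSym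
  rw [← Multiset.prod_map_mul]
  congr 1
  refine Multiset.map_congr rfl fun π hπ => ?_
  have := finite_quotient_of_dvd (dvd_of_mem_factors hπ)
  exact gQR_mul (prime_of_factor π hπ) a b

lemma gSym_eq_zero_of_not_isCoprime (hβ : β ≠ 0) (h : ¬IsCoprime a β) : gSym a β = 0 := by
  obtain ⟨π, hπ, hπa, hπβ⟩ : ∃ π, Prime π ∧ π ∣ a ∧ π ∣ β := by
    by_contra! H
    exact h (isCoprime_of_prime_dvd (fun h0 => hβ h0.2) H)
  obtain ⟨q, hq, hπq⟩ := exists_mem_factors_of_dvd hβ hπ.irreducible hπβ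
  exact Multiset.prod_eq_zero
    (Multiset.mem_map.mpr ⟨q, hq, gQR_eq_zero_of_dvd (hπq.symm.dvd.trans hπa)⟩)

lemma gSym_sq_eq_one (h : IsCoprime a β) : gSym a β ^ 2 = 1 := by
  rw [gSym, ← Multiset.prod_map_pow]
  refine Multiset.prod_eq_one fun _ hx => ?_
  obtain ⟨π, hπ, rfl⟩ := Multiset.mem_map.mp hx
  exact gQR_sq_eq_one fun hπa =>
    (irreducible_of_factor π hπ).not_isUnit (h.isUnit_of_dvd' hπa (dvd_of_mem_factors hπ))

open Classical in
lemma gSym_unit_mul_sq_eq_ite {η β₁ : GaussianInt} (hη : IsUnit η) (hβ₁ : β₁ ≠ 0)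
    (a : GaussianInt) :
    gSym a (η * β₁ ^ 2) = if IsCoprime a (η * β₁ ^ 2) then 1 else 0 := by
  split_ifs with h
  · have hβ₁a : IsCoprime a β₁ :=
      h.of_isCoprime_of_dvd_right (dvd_mul_of_dvd_right (dvd_pow_self β₁ two_ne_zero) η)
    rw [gSym_mul_right hη.ne_zero (pow_ne_zero 2 hβ₁), gSym_of_isUnit hη, gSym_pow_right,
      gSym_sq_eq_one hβ₁a, one_mul]
  · exact gSym_eq_zero_of_not_isCoprime (mul_ne_zero hη.ne_zero (pow_ne_zero 2 hβ₁)) h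

lemma exists_gSym_eq_neg_one (hβ : β ≠ 0) (hodd : ¬(⟨1, 1⟩ : GaussianInt) ∣ β)
    [Finite (GaussianInt ⧸ Ideal.span {β})]
    (hsq : ¬∃ η β₁ : GaussianInt, IsUnit η ∧ β = η * β₁ ^ 2) : ∃ α, gSym α β = -1 := by
  obtain ⟨π, k, B, hπ, hk, hπB, rfl⟩ := exists_prime_pow_odd_mul hβ hsq
  have hπβ : π ∣ π ^ k * B := dvd_mul_of_dvd_left (dvd_pow_self π hk.pos.ne') B
  have := finite_quotient_of_dvd hπβ
  obtain ⟨u, hu⟩ := exists_gQR_eq_neg_one hπ (GaussianInt.not_dvd_two_of_dvd hodd hπ hπβ)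
  obtain ⟨x, y, hxy⟩ := (Irreducible.coprime_iff_not_dvd hπ.irreducible).mpr hπB
  have hαπ : π ∣ y * B * u + x * π - u := ⟨x * (1 - u), by linear_combination u * hxy⟩
  have hαB : B ∣ y * B * u + x * π - 1 := ⟨y * (u - 1), by linear_combination hxy⟩
  refine ⟨y * B * u + x * π, ?_⟩
  rw [gSym_mul_right (pow_ne_zero k hπ.ne_zero) (right_ne_zero_of_mul hβ), gSym_pow_right,
    gSym_of_irreducible hπ.irreducible, gQR_congr hαπ, hu, hk.neg_one_pow, gSym_congr hαB,
    gSym_one_left, mul_one]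

end Symbol

lemma gSym_out_mk (β a : GaussianInt) :
    gSym (Ideal.Quotient.mk (Ideal.span {β}) a).out β = gSym a β :=
  gSym_congr (Ideal.Quotient.mk_span_singleton_eq_mk_iff.mp (Ideal.Quotient.mk_out _))

noncomputable def gSymChar (β : GaussianInt) (hβ : β ≠ 0)
    [Finite (GaussianInt ⧸ Ideal.span {β})] : MulChar (GaussianInt ⧸ Ideal.span {β}) ℤ where
  toFun x := gSym x.out β
  map_one' := by
    rw [← map_one (Ideal.Quotient.mk _), gSym_out_mk, gSym_one_left]
  map_mul' x y := by
    obtain ⟨a, rfl⟩ := Ideal.Quotient.mk_surjective x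
    obtain ⟨b, rfl⟩ := Ideal.Quotient.mk_surjective y
    simp only [← map_mul, gSym_out_mk, gSym_mul_left]
  map_nonunit' x hx := by
    obtain ⟨a, rfl⟩ := Ideal.Quotient.mk_surjective x
    rw [gSym_out_mk]
    exact gSym_eq_zero_of_not_isCoprime hβ (mt IsCoprime.isUnit_mk hx)

section Character

variable {β : GaussianInt} (hβ : β ≠ 0) [Finite (GaussianInt ⧸ Ideal.span {β})]

lemma gSymChar_mk (a : GaussianInt) : gSymChar β hβ (Ideal.Quotient.mk _ a) = gSym a β :=
  gSym_out_mk β a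

lemma gSymChar_ne_one {α : GaussianInt} (hα : gSym α β = -1) : gSymChar β hβ ≠ 1 := by
  intro h
  have hχα : gSymChar β hβ (Ideal.Quotient.mk _ α) = -1 := by rw [gSymChar_mk, hα]
  have hu : IsUnit (Ideal.Quotient.mk (Ideal.span {β}) α) := by
    by_contra hu
    rw [MulChar.map_nonunit _ hu] at hχα
    norm_num at hχα
  rw [h, MulChar.one_apply hu] at hχα
  norm_num at hχα

end Character

/-- Let `β` be a nonzero odd Gaussian integer and let `S` be a complete system
of residues modulo `β`. If `β` is not a unit times a square then
`∑_{α mod β} [α/β] = 0`; if `β = η·β₁²` with `η` a unit then the sum equals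
`φ(β)`, the number of residue classes coprime to `β`. -/
theorem stmt13 (β : GaussianInt) (hodd : ¬ (⟨1, 1⟩ : GaussianInt) ∣ β)
    (hβ : β ≠ 0) (S : Finset GaussianInt)
    (hS : ∀ γ : GaussianInt, ∃! s, s ∈ S ∧ β ∣ (γ - s)) :
    (¬ (∃ η β₁ : GaussianInt, IsUnit η ∧ β = η * β₁ ^ 2) →
      ∑ s ∈ S, gSym s β = 0) ∧
    ((∃ η β₁ : GaussianInt, IsUnit η ∧ β = η * β₁ ^ 2) →
      ∑ s ∈ S, gSym s β = (coprimeCount S β : ℤ)) := by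
  have := finite_quotient_of_residue_system hS
  have := Fintype.ofFinite (GaussianInt ⧸ Ideal.span {β})
  refine ⟨fun hsq => ?_, ?_⟩
  · obtain ⟨α, hα⟩ := exists_gSym_eq_neg_one hβ hodd hsq
    simp only [← gSymChar_mk hβ]
    rw [sum_residue_system_mk hS]
    exact MulChar.sum_eq_zero_of_ne_one (gSymChar_ne_one hβ hα)
  · rintro ⟨η, β₁, hη, rfl⟩
    have hβ₁ : β₁ ≠ 0 := by rintro rfl; simp at hβ
    simp only [gSym_unit_mul_sq_eq_ite hη hβ₁, Finset.sum_boole, coprimeCount]
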